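/- Let z be a real random variable distributed as a Gaussian N(μ, σ²) with mean μ ∈ ℝ and variance σ² > 0, and let Φ denote the standard normal cumulative distribution function, Φ(z) = ∫_{-∞}^z (2π)^{-1/2} exp(-t²/2) dt. Then E[Φ(z)] = Φ(μ / √(1 + σ²)). -/

import Mathlib

/-! If `X ∼ N(0, 1)` is independent of `Z ∼ N(μ, σ²)`, then `Φ(z) = P(X ≤ z)` gives
`E[Φ(Z)] = P(X - Z ≤ 0)`, and `X - Z ∼ N(-μ, 1 + σ²)`: the law of `X - Z` is the convolution of
`N(0, 1)` with the image of `N(μ, σ²)` under negation. Standardizing gives `Φ(μ / √(1 + σ²))`. -/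

open MeasureTheory ProbabilityTheory

noncomputable def stdNormalCDF (z : ℝ) : ℝ :=
  ∫ t in Set.Iic z, (Real.sqrt (2 * Real.pi))⁻¹ * Real.exp (-t ^ 2 / 2)

open Set
open scoped NNReal

namespace MeasureTheory.Measure

theorem conv_apply_eq_lintegral {G : Type*} [AddMonoid G] [MeasurableSpace G] [MeasurableAdd₂ G]
    (μ ν : Measure G) [SFinite μ] [SFinite ν] {s : Set G} (hs : MeasurableSet s) :
    (μ ∗ ν) s = ∫⁻ y, μ ((· + y) ⁻¹' s) ∂ν := by
  rw [conv, map_apply measurable_add hs, prod_apply_symm (measurable_add hs)]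
  rfl

end MeasureTheory.Measure

theorem lintegral_measure_Iic_eq_conv_map_neg (μ ν : Measure ℝ) [SFinite μ] [SFinite ν] :
    ∫⁻ z, μ (Iic z) ∂ν = (μ ∗ ν.map Neg.neg) (Iic 0) := by
  rw [Measure.conv_apply_eq_lintegral _ _ measurableSet_Iic,
    show (Neg.neg : ℝ → ℝ) = MeasurableEquiv.neg ℝ from rfl, lintegral_map_equiv]
  congr! with z
  ext x
  simp

theorem integral_measureReal_Iic_eq_conv_map_neg (μ ν : Measure ℝ) [IsFiniteMeasure μ]
    [SFinite ν] :
    ∫ z, μ.real (Iic z) ∂ν = (μ ∗ ν.map Neg.neg).real (Iic 0) := by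
  have hmono : Monotone fun z => μ (Iic z) := fun x y hxy => measure_mono (Iic_subset_Iic.2 hxy)
  rw [measureReal_def, ← lintegral_measure_Iic_eq_conv_map_neg,
    ← integral_toReal hmono.measurable.aemeasurable (ae_of_all _ fun _ => measure_lt_top _ _)]
  rfl

theorem gaussianReal_Iic_eq_gaussianReal_zero_one_Iic (m : ℝ) {v : ℝ≥0} (hv : v ≠ 0) (x : ℝ) :
    gaussianReal m v (Iic x) = gaussianReal 0 1 (Iic ((x - m) / Real.sqrt v)) := by
  have hstd : (gaussianReal m v).map (fun y => (y - m) / Real.sqrt v) = gaussianReal 0 1 := by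
    rw [show (fun y => (y - m) / Real.sqrt v) = (· / Real.sqrt v) ∘ (· - m) from rfl,
      ← Measure.map_map (by fun_prop) (by fun_prop), gaussianReal_map_sub_const,
      gaussianReal_map_div_const]
    congr 1
    · simp
    · ext; simp [Real.sq_sqrt, hv]
  have hs : 0 < Real.sqrt v := by positivity
  rw [← hstd, Measure.map_apply (by fun_prop) measurableSet_Iic]
  congr 1
  ext y
  simp [div_le_div_iff_of_pos_right hs]

theorem stdNormalCDF_eq_gaussianReal_real_Iic (z : ℝ) :
    stdNormalCDF z = (gaussianReal 0 1).real (Iic z) := by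
  rw [measureReal_def, gaussianReal_apply_eq_integral 0 one_ne_zero, ENNReal.toReal_ofReal
    (setIntegral_nonneg measurableSet_Iic fun t _ => gaussianPDFReal_nonneg 0 1 t)]
  simp [stdNormalCDF, gaussianPDFReal]

theorem expectation_stdNormalCDF_gaussian (μ : ℝ) (σ2 : ℝ) (hσ2 : 0 < σ2) :
    ∫ z, stdNormalCDF z ∂(gaussianReal μ ⟨σ2, hσ2.le⟩) =
      stdNormalCDF (μ / Real.sqrt (1 + σ2)) := by
  set v : ℝ≥0 := ⟨σ2, hσ2.le⟩
  have hv : 1 + v ≠ 0 := by positivity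
  simp_rw [stdNormalCDF_eq_gaussianReal_real_Iic]
  rw [integral_measureReal_Iic_eq_conv_map_neg, gaussianReal_map_neg,
    gaussianReal_conv_gaussianReal, measureReal_def, measureReal_def,
    gaussianReal_Iic_eq_gaussianReal_zero_one_Iic _ hv, zero_add, zero_sub, neg_neg]
  rfl
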